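/- arXiv:2006.04697 — 2 statements merged into one kernel-verified Lean document; each statement's English description precedes it below -/
import Mathlib

section
/- Let d be a positive integer and W a d×d real matrix. The linear map x ↦ W x from ℝ^d to ℝ^d is permutation equivariant — that is, W P = P W for every d×d permutation matrix P — if and only if there exist real numbers λ and γ such that W = λ I + γ 11ᵀ, where I is the d×d identity matrix and 11ᵀ is the d×d all-ones matrix. -/
/-!
Commuting with the permutation matrix of `σ` says exactly that `W (σ i) (σ j) = W i j`.
Permutations act transitively on the diagonal positions and on the ordered pairs of distinct
indices, so such a `W` has a constant diagonal `λ + γ` and a constant off-diagonal part `γ`.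
-/

open Matrix

/-- The `d × d` permutation matrix of a permutation `π`, with `P i j = 1` iff `i = π j`. -/
noncomputable def permMat (d : ℕ) (π : Equiv.Perm (Fin d)) : Matrix (Fin d) (Fin d) ℝ :=
  Matrix.of fun i j => if i = π j then (1 : ℝ) else 0

/-- The `d × d` all-ones matrix `11ᵀ`. -/
noncomputable def onesMat (d : ℕ) : Matrix (Fin d) (Fin d) ℝ :=
  Matrix.of fun _ _ => (1 : ℝ)

lemma exists_forall_eq_of_pairwise_eq {ι β : Type*} [Nonempty β] {p : ι → Prop} {f : ι → β}
    (h : ∀ x y, p x → p y → f x = f y) : ∃ c, ∀ x, p x → f x = c := by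
  by_cases hp : ∃ x, p x
  · obtain ⟨x₀, hx₀⟩ := hp
    exact ⟨f x₀, fun x hx => h x x₀ hx hx₀⟩
  · exact ⟨Classical.arbitrary β, fun x hx => absurd ⟨x, hx⟩ hp⟩

lemma Equiv.Perm.exists_apply_eq_and_apply_eq {α : Type*} [DecidableEq α] {i j k l : α}
    (hij : i ≠ j) (hkl : k ≠ l) : ∃ σ : Equiv.Perm α, σ i = k ∧ σ j = l := by
  set σ := Equiv.swap i k
  have hσj : σ j ≠ k := fun h => hij (σ.injective (by rw [h, Equiv.swap_apply_left]))
  refine ⟨σ.trans (Equiv.swap (σ j) l), ?_, Equiv.swap_apply_left _ _⟩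
  rw [Equiv.trans_apply, Equiv.swap_apply_left]
  exact Equiv.swap_apply_of_ne_of_ne hσj.symm hkl

namespace Matrix

variable {n R : Type*} [DecidableEq n]

lemma commute_permMatrix_iff [Fintype n] [NonAssocSemiring R] (M : Matrix n n R)
    (σ : Equiv.Perm n) : Commute M (σ.permMatrix R) ↔ ∀ i j, M (σ i) (σ j) = M i j := by
  rw [commute_iff_eq, Equiv.Perm.permMatrix, PEquiv.mul_toMatrix_toPEquiv,
    PEquiv.toMatrix_toPEquiv_mul, ← Matrix.ext_iff]
  simp only [submatrix_apply, id]
  refine ⟨fun h i j => by simpa using (h i (σ j)).symm, fun h i j => ?_⟩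
  simpa using (h i (σ.symm j)).symm

lemma smul_one_add_smul_ones_apply_perm [Semiring R] (a b : R) (σ : Equiv.Perm n) (i j : n) :
    (a • 1 + b • of fun _ _ => 1 : Matrix n n R) (σ i) (σ j) =
      (a • 1 + b • of fun _ _ => 1 : Matrix n n R) i j := by
  simp [one_apply]

lemma exists_eq_smul_one_add_smul_ones [Ring R] {M : Matrix n n R}
    (hM : ∀ (σ : Equiv.Perm n) i j, M (σ i) (σ j) = M i j) :
    ∃ a b : R, M = a • 1 + b • of fun _ _ => 1 := by
  obtain ⟨a, ha⟩ := exists_forall_eq_of_pairwise_eq (p := fun _ : n => True)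
    (f := fun i => M i i) fun i k _ _ => by simpa using (hM (Equiv.swap i k) i i).symm
  obtain ⟨b, hb⟩ := exists_forall_eq_of_pairwise_eq (p := fun x : n × n => x.1 ≠ x.2)
    (f := fun x => M x.1 x.2) fun x y hx hy => by
      obtain ⟨σ, h₁, h₂⟩ := Equiv.Perm.exists_apply_eq_and_apply_eq hx hy
      simpa [h₁, h₂] using (hM σ x.1 x.2).symm
  refine ⟨a - b, b, Matrix.ext fun i j => ?_⟩
  rcases eq_or_ne i j with rfl | hij
  · simp [ha i trivial]
  · simp [hb (i, j) hij, one_apply_ne hij]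

theorem forall_commute_permMatrix_iff [Fintype n] [Ring R] (M : Matrix n n R) :
    (∀ σ : Equiv.Perm n, Commute M (σ.permMatrix R)) ↔
      ∃ a b : R, M = a • 1 + b • of fun _ _ => 1 := by
  simp only [commute_permMatrix_iff]
  refine ⟨exists_eq_smul_one_add_smul_ones, ?_⟩
  rintro ⟨a, b, rfl⟩ σ i j
  exact smul_one_add_smul_ones_apply_perm a b σ i j

end Matrix

lemma permMat_eq_permMatrix (d : ℕ) (π : Equiv.Perm (Fin d)) :
    permMat d π = π⁻¹.permMatrix ℝ := by
  ext i j
  simp [permMat, PEquiv.toMatrix_apply, Equiv.eq_symm_apply, eq_comm]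

theorem stmt_0_general (d : ℕ) (W : Matrix (Fin d) (Fin d) ℝ) :
    (∀ π : Equiv.Perm (Fin d), W * permMat d π = permMat d π * W) ↔
      ∃ lam gam : ℝ,
        W = lam • (1 : Matrix (Fin d) (Fin d) ℝ) + gam • onesMat d := by
  simp only [permMat_eq_permMatrix, ← commute_iff_eq]
  rw [inv_surjective.forall]
  exact forall_commute_permMatrix_iff W

/-- A linear layer `x ↦ W x` on `ℝ^d` is permutation equivariant (i.e. `W P = P W` for every
permutation matrix `P`) iff `W = λ I + γ 11ᵀ` for some reals `λ, γ`. -/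
theorem stmt_0 (d : ℕ) (hd : 0 < d) (W : Matrix (Fin d) (Fin d) ℝ) :
    (∀ π : Equiv.Perm (Fin d), W * permMat d π = permMat d π * W) ↔
      ∃ lam gam : ℝ,
        W = lam • (1 : Matrix (Fin d) (Fin d) ℝ) + gam • onesMat d :=
  stmt_0_general d W
end

section
/- Let (Ω, ℱ, ℙ) be a probability space, d a positive integer, C a d×d real matrix such that I − C is invertible, and ε₁, …, ε_d : Ω → ℝ square-integrable random variables. Suppose X₁, …, X_d : Ω → ℝ satisfy the linear structural equation model X_i(ω) = Σ_{k=1}^d C_{ik} X_k(ω) + ε_i(ω) for all i and all ω. Then each X_i is square-integrable and the covariance matrices Σ (with Σ_{ij} = Cov(X_i, X_j)) and Φ (with Φ_{ij} = Cov(ε_i, ε_j)) satisfy Σ = (I − C)^{-1} Φ ((I − C)^{-1})ᵀ. -/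
/-!
Rewriting the structural equations as `(I − C) X = ε` gives `X = (I − C)⁻¹ ε` pointwise. So `X`
is a linear image `A ε` of square-integrable variables, and bilinearity of the covariance gives
`Cov(A ε) = A Cov(ε) Aᵀ`.
-/

open Matrix MeasureTheory ProbabilityTheory

/-- The covariance `Cov(U, V) = E[(U − E U)(V − E V)]` of two real random variables. -/
noncomputable def cov {Ω : Type*} [MeasureSpace Ω] (U V : Ω → ℝ) : ℝ :=
  ∫ ω, (U ω - ∫ ω', U ω') * (V ω - ∫ ω', V ω')

theorem Matrix.eq_inv_mulVec_of_eq_mulVec_add {n R : Type*} [Fintype n] [DecidableEq n]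
    [CommRing R] {C : Matrix n n R} (hC : IsUnit (1 - C)) {x e : n → R}
    (hx : x = C *ᵥ x + e) : x = (1 - C)⁻¹ *ᵥ e := by
  have he : e = (1 - C) *ᵥ x := by
    rw [sub_mulVec, one_mulVec]
    exact eq_sub_of_add_eq' hx.symm
  rw [he, mulVec_mulVec, nonsing_inv_mul _ ((isUnit_iff_isUnit_det _).mp hC), one_mulVec]

section CovarianceMatrix

variable {Ω ι κ : Type*} [MeasurableSpace Ω] {μ : Measure Ω} [Fintype ι]

noncomputable def covarianceMatrix (Y : ι → Ω → ℝ) (μ : Measure Ω) : Matrix ι ι ℝ :=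
  Matrix.of fun i j => cov[Y i, Y j; μ]

lemma memLp_mulVec {p : ENNReal} {Y : ι → Ω → ℝ} (hY : ∀ k, MemLp (Y k) p μ)
    (A : Matrix κ ι ℝ) (i : κ) : MemLp (fun ω => (A *ᵥ fun k => Y k ω) i) p μ :=
  memLp_finsetSum _ fun k _ => (hY k).const_mul (A i k)

lemma covarianceMatrix_mulVec [IsFiniteMeasure μ] [Fintype κ] {Y : ι → Ω → ℝ}
    (hY : ∀ k, MemLp (Y k) 2 μ) (A : Matrix κ ι ℝ) :
    covarianceMatrix (fun i ω => (A *ᵥ fun k => Y k ω) i) μ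
      = A * covarianceMatrix Y μ * Aᵀ := by
  ext i j
  simp only [covarianceMatrix, mulVec, dotProduct, of_apply, mul_apply, transpose_apply]
  rw [covariance_fun_sum_fun_sum (fun k => (hY k).const_mul _) (fun l => (hY l).const_mul _)]
  simp only [covariance_const_mul_left, covariance_const_mul_right, Finset.sum_mul]
  rw [Finset.sum_comm]
  exact Finset.sum_congr rfl fun _ _ => Finset.sum_congr rfl fun _ _ => by ring

end CovarianceMatrix

lemma of_cov_eq_covarianceMatrix {Ω ι : Type*} [MeasureSpace Ω] (Y : ι → Ω → ℝ) :
    (Matrix.of fun i j => cov (Y i) (Y j)) = covarianceMatrix Y volume :=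
  rfl

theorem stmt_7_general {Ω : Type*} [MeasureSpace Ω] [IsProbabilityMeasure (volume : Measure Ω)]
    (d : ℕ) (C : Matrix (Fin d) (Fin d) ℝ)
    (hC : IsUnit (1 - C))
    (ε : Fin d → Ω → ℝ) (hε : ∀ i, MemLp (ε i) 2)
    (X : Fin d → Ω → ℝ)
    (hX : ∀ i ω, X i ω = (∑ k, C i k * X k ω) + ε i ω) :
    (∀ i, MemLp (X i) 2) ∧
    (Matrix.of fun i j => cov (X i) (X j))
      = (1 - C)⁻¹ * (Matrix.of fun i j => cov (ε i) (ε j)) * ((1 - C)⁻¹)ᵀ := by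
  have hXε : X = fun i ω => ((1 - C)⁻¹ *ᵥ fun k => ε k ω) i := by
    funext i ω
    have hsem : (fun k => X k ω) = C *ᵥ (fun k => X k ω) + fun k => ε k ω :=
      funext fun k => hX k ω
    exact congrFun (eq_inv_mulVec_of_eq_mulVec_add hC hsem) i
  subst hXε
  rw [of_cov_eq_covarianceMatrix, of_cov_eq_covarianceMatrix]
  exact ⟨memLp_mulVec hε (1 - C)⁻¹, covarianceMatrix_mulVec hε (1 - C)⁻¹⟩

/-- For a linear structural equation model `X = C X + ε` with `I − C` invertible and
square-integrable noise `ε`, each `Xᵢ` is square-integrable and the covariance matrices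
satisfy `Σ = (I − C)⁻¹ Φ ((I − C)⁻¹)ᵀ`. -/
theorem stmt_7 {Ω : Type*} [MeasureSpace Ω] [IsProbabilityMeasure (volume : Measure Ω)]
    (d : ℕ) (hd : 0 < d) (C : Matrix (Fin d) (Fin d) ℝ)
    (hC : IsUnit (1 - C))
    (ε : Fin d → Ω → ℝ) (hε : ∀ i, MemLp (ε i) 2)
    (X : Fin d → Ω → ℝ)
    (hX : ∀ i ω, X i ω = (∑ k, C i k * X k ω) + ε i ω) :
    (∀ i, MemLp (X i) 2) ∧
    (Matrix.of fun i j => cov (X i) (X j))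
      = (1 - C)⁻¹ * (Matrix.of fun i j => cov (ε i) (ε j)) * ((1 - C)⁻¹)ᵀ :=
  stmt_7_general d C hC ε hε X hX
end
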